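/- arXiv:2201.07424 — 8 statements merged into one kernel-verified Lean document; each statement's English description precedes it below -/
import Mathlib

section
/- Let M be a finite ordered chores instance (chores indexed c_1,...,c_m by descending absolute value under additive valuation v ≤ 0) with m ≥ 2d+1 for an integer d ≥ 1. Then: (1) v({c}) ≥ MMS^d(M) for every chore c ∈ M; (2) v({c_d, c_{d+1}}) ≥ MMS^d(M); and (3) v({c_{2d-1}, c_{2d}, c_{2d+1}}) ≥ MMS^d(M). -/
open Finset

/-- The 1-out-of-`d` maximin share of an agent with additive valuation `v`
over `m` items: the maximum over partitions of the items into `d` bundles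
of the minimum bundle value. -/
noncomputable def MMS {m : ℕ} (d : ℕ) (v : Fin m → ℝ) : ℝ :=
  ⨆ P : Fin m → Fin d, ⨅ j : Fin d, ∑ i ∈ Finset.univ.filter (fun i => P i = j), v i

lemma MMS_le {m d : ℕ} (hd : 1 ≤ d) {v : Fin m → ℝ} {a : ℝ}
    (h : ∀ P : Fin m → Fin d, ∃ j : Fin d,
      ∑ i ∈ Finset.univ.filter (fun i => P i = j), v i ≤ a) : MMS d v ≤ a := by
  have : Nonempty (Fin d) := ⟨⟨0, hd⟩⟩
  apply ciSup_le
  intro P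
  obtain ⟨j, hj⟩ := h P
  exact ciInf_le_of_le (Finite.bddBelow_range _) j hj

lemma sum_subset_nonpos {α : Type*} [DecidableEq α] {v : α → ℝ} {S T : Finset α}
    (hv : ∀ i, v i ≤ 0) (h : T ⊆ S) : ∑ i ∈ S, v i ≤ ∑ i ∈ T, v i := by
  rw [← Finset.sum_sdiff h]
  have : ∑ i ∈ S \ T, v i ≤ 0 := Finset.sum_nonpos (fun i _ => hv i)
  linarith

lemma two_sorted {k : ℕ} {S : Finset (Fin k)} (hS : 2 ≤ S.card) :
    ∃ a b, a ∈ S ∧ b ∈ S ∧ a < b := by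
  have h0 : S.Nonempty := Finset.card_pos.mp (by omega)
  have haS := S.min'_mem h0
  set a := S.min' h0 with ha
  have hc1 : 1 ≤ (S.erase a).card := by rw [Finset.card_erase_of_mem haS]; omega
  have h1 : (S.erase a).Nonempty := Finset.card_pos.mp (by omega)
  have hbS1 := (S.erase a).min'_mem h1
  set b := (S.erase a).min' h1 with hb
  have hbS : b ∈ S := Finset.mem_of_mem_erase hbS1
  exact ⟨a, b, haS, hbS,
    lt_of_le_of_ne (S.min'_le b hbS) (Ne.symm (Finset.ne_of_mem_erase hbS1))⟩

lemma three_sorted {k : ℕ} {S : Finset (Fin k)} (hS : 3 ≤ S.card) :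
    ∃ a b c, a ∈ S ∧ b ∈ S ∧ c ∈ S ∧ a < b ∧ b < c := by
  have h0 : S.Nonempty := Finset.card_pos.mp (by omega)
  have haS := S.min'_mem h0
  set a := S.min' h0 with ha
  have hc1 : 2 ≤ (S.erase a).card := by rw [Finset.card_erase_of_mem haS]; omega
  obtain ⟨b, c, hb, hc, hbc⟩ := two_sorted hc1
  have hbS : b ∈ S := Finset.mem_of_mem_erase hb
  have hcS : c ∈ S := Finset.mem_of_mem_erase hc
  exact ⟨a, b, c, haS, hbS, hcS,
    lt_of_le_of_ne (S.min'_le b hbS) (Ne.symm (Finset.ne_of_mem_erase hb)), hbc⟩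

/-- In an ordered chores instance with `m ≥ 2d+1`:
(1) every single chore is worth at least the 1-out-of-`d` MMS;
(2) the bundle `{c_d, c_{d+1}}` is worth at least the 1-out-of-`d` MMS;
(3) the bundle `{c_{2d-1}, c_{2d}, c_{2d+1}}` is worth at least the 1-out-of-`d` MMS.
(Indices are 1-based in the paper; here `c_t` is the item with 0-based index `t-1`.) -/
theorem stmt1 {m : ℕ} (d : ℕ) (v : Fin m → ℝ)
    (hd : 1 ≤ d) (hm : 2 * d + 1 ≤ m)
    (hchores : ∀ i, v i ≤ 0)
    (hordered : ∀ i j : Fin m, i ≤ j → v i ≤ v j) :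
    (∀ c : Fin m, MMS d v ≤ v c) ∧
    (MMS d v ≤ v ⟨d - 1, by omega⟩ + v ⟨d, by omega⟩) ∧
    (MMS d v ≤ v ⟨2 * d - 2, by omega⟩ + v ⟨2 * d - 1, by omega⟩ + v ⟨2 * d, by omega⟩) := by
  refine ⟨?_, ?_, ?_⟩
  · -- (1) single chores
    intro c
    apply MMS_le hd
    intro P
    refine ⟨P c, ?_⟩
    calc ∑ i ∈ Finset.univ.filter (fun i => P i = P c), v i
        ≤ ∑ i ∈ ({c} : Finset (Fin m)), v i :=
          sum_subset_nonpos hchores (by simp)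
      _ = v c := by simp
  · -- (2) pair
    apply MMS_le hd
    intro P
    have hmlt : d + 1 ≤ m := by omega
    set Q : Fin (d + 1) → Fin d := fun x => P (Fin.castLE hmlt x) with hQ
    obtain ⟨j, -, hj⟩ := Finset.exists_lt_card_fiber_of_mul_lt_card_of_maps_to
      (s := (univ : Finset (Fin (d + 1)))) (t := (univ : Finset (Fin d))) (f := Q) (n := 1)
      (fun a _ => Finset.mem_univ _) (by simp)
    obtain ⟨a, b, haf, hbf, hab⟩ := two_sorted hj
    have haj : Q a = j := (Finset.mem_filter.mp haf).2
    have hbj : Q b = j := (Finset.mem_filter.mp hbf).2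
    refine ⟨j, ?_⟩
    have hne : Fin.castLE hmlt a ≠ Fin.castLE hmlt b := by
      intro h
      exact absurd (congrArg Fin.val h) (by simpa using (Fin.lt_iff_val_lt_val.mp hab).ne)
    have hsub : ({Fin.castLE hmlt a, Fin.castLE hmlt b} : Finset (Fin m)) ⊆
        Finset.univ.filter (fun i => P i = j) := by
      intro x hx
      simp only [Finset.mem_insert, Finset.mem_singleton] at hx
      rcases hx with rfl | rfl <;> simp [haj, hbj, hQ] <;> assumption
    calc ∑ i ∈ Finset.univ.filter (fun i => P i = j), v i
        ≤ ∑ i ∈ ({Fin.castLE hmlt a, Fin.castLE hmlt b} : Finset (Fin m)), v i :=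
          sum_subset_nonpos hchores hsub
      _ = v (Fin.castLE hmlt a) + v (Fin.castLE hmlt b) := Finset.sum_pair hne
      _ ≤ v ⟨d - 1, by omega⟩ + v ⟨d, by omega⟩ := by
          have hav : (a : ℕ) < (b : ℕ) := hab
          have hbv : (b : ℕ) < d + 1 := b.isLt
          gcongr
          · exact hordered _ _ (by simp [Fin.le_def]; omega)
          · exact hordered _ _ (by simp [Fin.le_def]; omega)
  · -- (3) triple
    apply MMS_le hd
    intro P
    have hmlt : 2 * d + 1 ≤ m := hm
    set Q : Fin (2 * d + 1) → Fin d := fun x => P (Fin.castLE hmlt x) with hQ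
    obtain ⟨j, -, hj⟩ := Finset.exists_lt_card_fiber_of_mul_lt_card_of_maps_to
      (s := (univ : Finset (Fin (2 * d + 1)))) (t := (univ : Finset (Fin d))) (f := Q) (n := 2)
      (fun a _ => Finset.mem_univ _) (by simp; omega)
    obtain ⟨a, b, c, haf, hbf, hcf, hab, hbc⟩ := three_sorted hj
    have haj : Q a = j := (Finset.mem_filter.mp haf).2
    have hbj : Q b = j := (Finset.mem_filter.mp hbf).2
    have hcj : Q c = j := (Finset.mem_filter.mp hcf).2
    refine ⟨j, ?_⟩
    have hav : (a : ℕ) < (b : ℕ) := hab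
    have hbv : (b : ℕ) < (c : ℕ) := hbc
    have hcv : (c : ℕ) < 2 * d + 1 := c.isLt
    have hne1 : Fin.castLE hmlt a ≠ Fin.castLE hmlt b := by
      intro h; exact absurd (congrArg Fin.val h) (by simpa using hav.ne)
    have hne2 : Fin.castLE hmlt a ≠ Fin.castLE hmlt c := by
      intro h; exact absurd (congrArg Fin.val h) (by simpa using (by omega : (a:ℕ) ≠ (c:ℕ)))
    have hne3 : Fin.castLE hmlt b ≠ Fin.castLE hmlt c := by
      intro h; exact absurd (congrArg Fin.val h) (by simpa using hbv.ne)
    have hsub : ({Fin.castLE hmlt a, Fin.castLE hmlt b, Fin.castLE hmlt c} : Finset (Fin m)) ⊆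
        Finset.univ.filter (fun i => P i = j) := by
      intro x hx
      simp only [Finset.mem_insert, Finset.mem_singleton] at hx
      rcases hx with rfl | rfl | rfl <;> simp [haj, hbj, hcj, hQ] <;> assumption
    calc ∑ i ∈ Finset.univ.filter (fun i => P i = j), v i
        ≤ ∑ i ∈ ({Fin.castLE hmlt a, Fin.castLE hmlt b, Fin.castLE hmlt c} : Finset (Fin m)), v i :=
          sum_subset_nonpos hchores hsub
      _ = v (Fin.castLE hmlt a) + v (Fin.castLE hmlt b) + v (Fin.castLE hmlt c) := by
          rw [Finset.sum_insert (by simp [hne1, hne2]), Finset.sum_pair hne3]; ring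
      _ ≤ v ⟨2 * d - 2, by omega⟩ + v ⟨2 * d - 1, by omega⟩ + v ⟨2 * d, by omega⟩ := by
          gcongr
          · exact hordered _ _ (by simp [Fin.le_def]; omega)
          · exact hordered _ _ (by simp [Fin.le_def]; omega)
          · exact hordered _ _ (by simp [Fin.le_def]; omega)
end

section
/- For every integers d ≥ 1 and q ≥ 1, and any additive chore valuation v, MMS^d(M) ≥ q · MMS^{qd}(M). Consequently, if an allocation gives an agent value at least its 1-out-of-d MMS, it gives the agent at least q times its 1-out-of-(qd) MMS. -/
open Finset

/-- For chores, `MMS^d ≥ q · MMS^{qd}`; consequently any allocation giving an agent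
at least its 1-out-of-`d` MMS gives it at least `q` times its 1-out-of-`qd` MMS. -/
theorem stmt3 {m : ℕ} (d q : ℕ) (v : Fin m → ℝ)
    (hd : 1 ≤ d) (hq : 1 ≤ q)
    (hchores : ∀ i, v i ≤ 0) :
    (q : ℝ) * MMS (q * d) v ≤ MMS d v ∧
    (∀ x : ℝ, MMS d v ≤ x → (q : ℝ) * MMS (q * d) v ≤ x) := by
  have hd0 : 0 < d := hd
  have hq0 : 0 < q := hq
  haveI : NeZero d := ⟨hd0.ne'⟩
  haveI : NeZero (q * d) := ⟨(Nat.mul_pos hq0 hd0).ne'⟩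
  have main : (q : ℝ) * MMS (q * d) v ≤ MMS d v := by
    rw [MMS, Real.mul_iSup_of_nonneg (by positivity)]
    apply ciSup_le
    intro Q
    set e := finProdFinEquiv (m := q) (n := d) with he
    set g : Fin (q * d) → Fin d := fun k => (e.symm k).2 with hg
    have hbdd : BddAbove (Set.range fun P : Fin m → Fin d =>
        ⨅ j, ∑ i ∈ univ.filter (fun i => P i = j), v i) :=
      Set.Finite.bddAbove (Set.finite_range _)
    refine le_trans ?_ (le_ciSup hbdd (g ∘ Q))
    apply le_ciInf
    intro j
    have hfib : ∑ i ∈ univ.filter (fun i => (g ∘ Q) i = j), v i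
        = ∑ k ∈ univ.filter (fun k => g k = j),
            ∑ i ∈ univ.filter (fun i => Q i = k), v i := by
      rw [Finset.sum_fiberwise_eq_sum_filter univ (univ.filter (fun k => g k = j)) Q v]
      congr 1
      ext i
      simp
    rw [hfib]
    have hcard : (univ.filter (fun k => g k = j)).card = q := by
      have himg : univ.filter (fun k => g k = j)
          = Finset.image (fun a : Fin q => e (a, j)) univ := by
        ext k
        simp only [mem_filter, mem_univ, true_and, Finset.mem_image]
        constructor
        · intro h
          exact ⟨(e.symm k).1, by rw [← h]; simp [hg]⟩
        · rintro ⟨a, rfl⟩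
          simp [hg]
      rw [himg, Finset.card_image_of_injective _
        (fun a b hab => by simpa using congrArg Prod.fst (e.injective hab)),
        Finset.card_univ, Fintype.card_fin]
    set S : Fin (q * d) → ℝ := fun k => ∑ i ∈ univ.filter (fun i => Q i = k), v i with hS
    have hinf_le : ∀ k ∈ univ.filter (fun k => g k = j), (⨅ k', S k') ≤ S k :=
      fun k _ => ciInf_le (Set.Finite.bddBelow (Set.finite_range _)) k
    have h2 := Finset.card_nsmul_le_sum (univ.filter (fun k => g k = j)) S (⨅ k', S k') hinf_le
    rw [hcard] at h2
    calc (q : ℝ) * ⨅ k, S k = q • (⨅ k, S k) := by simp [nsmul_eq_mul]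
      _ ≤ _ := h2
  exact ⟨main, fun x hx => le_trans main hx⟩
end

section
/- The bound in the previous proposition is tight: for every integers d ≥ 1 and q ≥ 1 there exists an additive chore valuation (namely qd+1 chores each of value -1) such that MMS^d(M) = -(q+1) and MMS^{qd+1}(M) = -1, so MMS^d(M) < q · MMS^{qd+1}(M). -/
/-!
Among `m` chores of value `-1` split into `d` bundles, some bundle receives at least `⌈m / d⌉`
of them by pigeonhole, and dealing the chores out round-robin (by residue mod `d`) attains this
bound, so `MMS^d = -⌈m / d⌉`. For `m = q d + 1` this is `-(q + 1)` with `d` bundles and `-1`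
with `q d + 1` bundles, and `-(q + 1) < -q`.
-/

open Finset

section ConstantChores

variable {m d : ℕ}

-- `(m + d - 1) / d` is `⌈m / d⌉`.

lemma MMS_neg_one_eq_neg_of_card_fiber [NeZero d] {k : ℕ}
    (hlower : ∀ P : Fin m → Fin d, ∃ j, k ≤ #{i | P i = j})
    (hupper : ∃ P : Fin m → Fin d, ∀ j, #{i | P i = j} ≤ k) :
    MMS d (fun _ : Fin m => (-1 : ℝ)) = -k := by
  have bundle_value (P : Fin m → Fin d) (j : Fin d) :
      ∑ i ∈ univ.filter (fun i => P i = j), (-1 : ℝ) = -(#{i | P i = j} : ℝ) := by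
    simp
  refine le_antisymm (ciSup_le fun P => ?_) ?_
  · obtain ⟨j, hj⟩ := hlower P
    calc ⨅ j, ∑ i ∈ univ.filter (fun i => P i = j), (-1 : ℝ)
        ≤ ∑ i ∈ univ.filter (fun i => P i = j), (-1 : ℝ) :=
          ciInf_le (Finite.bddBelow_range _) j
      _ ≤ -k := by rw [bundle_value]; exact neg_le_neg (mod_cast hj)
  · obtain ⟨P, hP⟩ := hupper
    refine le_ciSup_of_le (Finite.bddAbove_range _) P (le_ciInf fun j => ?_)
    rw [bundle_value]
    exact neg_le_neg (mod_cast hP j)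

lemma le_add_sub_one_div_mul (hd : 0 < d) : m ≤ (m + d - 1) / d * d := by
  have h1 := Nat.div_add_mod (m + d - 1) d
  have h2 := Nat.mod_lt (m + d - 1) hd
  rw [mul_comm]; omega

lemma exists_ceilDiv_le_card_fiber (hd : 0 < d) (P : Fin m → Fin d) :
    ∃ j, (m + d - 1) / d ≤ #{i | P i = j} := by
  have hkd := Nat.div_mul_le_self (m + d - 1) d
  generalize (m + d - 1) / d = k at hkd ⊢
  rcases k with _ | k
  · exact ⟨⟨0, hd⟩, Nat.zero_le _⟩
  · rw [Nat.succ_mul] at hkd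
    exact Fintype.exists_lt_card_fiber_of_mul_lt_card (f := P) (n := k) <| by
      simp only [Fintype.card_fin]; rw [mul_comm]; omega

lemma card_fiber_mod_le (hd : 0 < d) (j : Fin d) :
    #{i : Fin m | (⟨i % d, Nat.mod_lt _ hd⟩ : Fin d) = j} ≤ (m + d - 1) / d := by
  calc #{i : Fin m | (⟨i % d, Nat.mod_lt _ hd⟩ : Fin d) = j}
      ≤ #(range ((m + d - 1) / d)) := by
        refine card_le_card_of_injOn (fun i => i / d) (fun i _ => ?_) fun a ha b hb hab => ?_
        · simpa [Nat.div_lt_iff_lt_mul hd] using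
            lt_of_lt_of_le i.isLt (le_add_sub_one_div_mul hd)
        · simp only [coe_filter, mem_univ, true_and, Set.mem_ofPred_eq, Fin.ext_iff] at ha hb
          exact Fin.ext <| by
            rw [← Nat.div_add_mod a d, ← Nat.div_add_mod b d, ha, hb]
            exact congrArg (d * · + j) hab
    _ = (m + d - 1) / d := card_range _

theorem MMS_neg_one (hd : 0 < d) :
    MMS d (fun _ : Fin m => (-1 : ℝ)) = -(((m + d - 1) / d : ℕ) : ℝ) :=
  haveI : NeZero d := ⟨hd.ne'⟩
  MMS_neg_one_eq_neg_of_card_fiber (exists_ceilDiv_le_card_fiber hd)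
    ⟨_, card_fiber_mod_le hd⟩

end ConstantChores

theorem stmt4_general (d q : ℕ) (hd : 1 ≤ d) :
    MMS d (fun _ : Fin (q * d + 1) => (-1 : ℝ)) = -((q : ℝ) + 1) ∧
    MMS (q * d + 1) (fun _ : Fin (q * d + 1) => (-1 : ℝ)) = -1 ∧
    MMS d (fun _ : Fin (q * d + 1) => (-1 : ℝ)) <
      (q : ℝ) * MMS (q * d + 1) (fun _ : Fin (q * d + 1) => (-1 : ℝ)) := by
  have hd_share : MMS d (fun _ : Fin (q * d + 1) => (-1 : ℝ)) = -((q : ℝ) + 1) := by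
    rw [MMS_neg_one hd, Nat.div_eq_of_lt_le (k := q + 1) (by rw [add_mul]; omega)
      (by rw [add_mul, add_mul]; omega)]
    push_cast; ring
  have hm_share : MMS (q * d + 1) (fun _ : Fin (q * d + 1) => (-1 : ℝ)) = -1 := by
    rw [MMS_neg_one (Nat.succ_pos _), Nat.div_eq_of_lt_le (k := 1) (by omega) (by omega)]
    simp
  refine ⟨hd_share, hm_share, ?_⟩
  rw [hd_share, hm_share]
  linarith

/-- Tightness of `MMS^d ≥ q · MMS^{qd}`: with `q*d+1` chores each of value `-1`,
`MMS^d = -(q+1)` and `MMS^{qd+1} = -1`, so `MMS^d < q · MMS^{qd+1}`. -/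
theorem stmt4 (d q : ℕ) (hd : 1 ≤ d) (hq : 1 ≤ q) :
    MMS d (fun _ : Fin (q * d + 1) => (-1 : ℝ)) = -((q : ℝ) + 1) ∧
    MMS (q * d + 1) (fun _ : Fin (q * d + 1) => (-1 : ℝ)) = -1 ∧
    MMS d (fun _ : Fin (q * d + 1) => (-1 : ℝ)) <
      (q : ℝ) * MMS (q * d + 1) (fun _ : Fin (q * d + 1) => (-1 : ℝ)) :=
  stmt4_general d q hd
end

section
/- Let M be an ordered chores instance (chores c_1,...,c_m in descending order of |v_i(c_j)| for every agent i) with m < 2d. Then for each agent i, MMS^{d-1}(M \ {c_1}) ≥ MMS^d(M), i.e., removing the largest chore and one bundle does not decrease the maximin share. -/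
open Finset

/-- Key lemma: given a partition `P` of `Fin (M+1)` into `n+1` bundles, `n ≥ 1`,
`M+1 < 2(n+1)`, there is a partition `Q : Fin M → Fin n` of the chores other than
chore `0` whose minimum bundle value is at least that of `P`. -/
lemma stmt5_key {M n : ℕ} (hn : 0 < n) (hm : M + 1 < 2 * (n + 1)) (v : Fin (M+1) → ℝ)
    (hchores : ∀ i, v i ≤ 0) (hordered : ∀ i j : Fin (M+1), i ≤ j → v i ≤ v j)
    (P : Fin (M+1) → Fin (n+1)) :
    ∃ Q : Fin M → Fin n,
      (⨅ j : Fin (n+1), ∑ i ∈ Finset.univ.filter (fun i => P i = j), v i)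
      ≤ ⨅ k : Fin n, ∑ i ∈ Finset.univ.filter (fun i => Q i = k), v i.succ := by
  classical
  set L := ⨅ j : Fin (n+1), ∑ i ∈ Finset.univ.filter (fun i => P i = j), v i with hLdef
  have hL : ∀ j, L ≤ ∑ i ∈ Finset.univ.filter (fun i => P i = j), v i := fun j =>
    ciInf_le (Finite.bddBelow_range _) j
  -- pigeonhole
  obtain ⟨j0, hj0⟩ : ∃ j0 : Fin (n+1), (univ.filter (fun i => P i = j0)).card ≤ 1 := by
    by_contra h
    push_neg at h
    have hcard : (univ : Finset (Fin (M+1))).card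
        = ∑ j : Fin (n+1), (univ.filter (fun i => P i = j)).card :=
      card_eq_sum_card_fiberwise (fun x _ => mem_univ _)
    have h2 : ∑ j : Fin (n+1), 2 ≤ ∑ j : Fin (n+1), (univ.filter (fun i => P i = j)).card :=
      Finset.sum_le_sum fun j _ => h j
    simp [card_univ] at hcard h2
    omega
  set j1 : Fin (n+1) := if P 0 = j0 then j0.succAbove ⟨0, hn⟩ else P 0 with hj1def
  have hj1 : j1 ≠ j0 := by
    rw [hj1def]; split
    · exact Fin.succAbove_ne j0 _
    · assumption
  set t : Fin (M+1) → Fin (n+1) := fun x => if P x = j0 then j1 else P x with htdef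
  have ht : ∀ x, t x ≠ j0 := by
    intro x; rw [htdef]; dsimp only; split
    · exact hj1
    · assumption
  set Q : Fin M → Fin n := fun i => (finSuccAboveEquiv j0).symm ⟨t i.succ, ht _⟩ with hQdef
  have hQiff : ∀ (i : Fin M) (k : Fin n), Q i = k ↔ t i.succ = j0.succAbove k := by
    intro i k
    rw [hQdef]
    constructor
    · intro h
      have := congrArg (finSuccAboveEquiv j0) h
      rw [Equiv.apply_symm_apply, finSuccAboveEquiv_apply] at this
      exact congrArg Subtype.val this
    · intro h
      have : (⟨t i.succ, ht _⟩ : {x : Fin (n+1) // x ≠ j0}) = finSuccAboveEquiv j0 k := by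
        rw [finSuccAboveEquiv_apply]; exact Subtype.ext h
      show (finSuccAboveEquiv j0).symm ⟨t i.succ, ht _⟩ = k
      rw [this, Equiv.symm_apply_apply]
  haveI : Nonempty (Fin n) := ⟨⟨0, hn⟩⟩
  refine ⟨Q, le_ciInf fun k => ?_⟩
  set j : Fin (n+1) := j0.succAbove k with hjdef
  have hjne : j ≠ j0 := Fin.succAbove_ne j0 k
  -- rewrite the sum over Fin M as a sum over Fin (M+1)
  have hsum : ∑ i ∈ univ.filter (fun i => Q i = k), v i.succ
      = ∑ x ∈ univ.filter (fun x => x ≠ 0 ∧ t x = j), v x := by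
    refine Finset.sum_bij' (fun i _ => i.succ)
      (fun x hx => x.pred (by simp only [Finset.mem_filter] at hx; exact hx.2.1)) ?_ ?_ ?_ ?_ ?_
    · intro a ha
      simp only [mem_filter, mem_univ, true_and] at ha ⊢
      exact ⟨Fin.succ_ne_zero a, (hQiff a k).mp ha⟩
    · intro x hx
      simp only [mem_filter, mem_univ, true_and] at hx ⊢
      rw [hQiff, Fin.succ_pred]
      exact hx.2
    · intro a ha; exact Fin.pred_succ a
    · intro x hx; exact Fin.succ_pred x _
    · intro a ha; rfl
  rw [hsum]
  -- now the value estimate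
  by_cases hP0 : P 0 = j0
  · -- bundle j0 is exactly {0}
    have hA0 : univ.filter (fun x => P x = j0) = {0} := by
      apply Finset.eq_singleton_iff_unique_mem.mpr
      refine ⟨by simp [hP0], fun x hx => ?_⟩
      by_contra hne
      have h2 : ({0, x} : Finset (Fin (M+1))).card = 2 := by
        rw [Finset.card_insert_of_notMem (by simp [Ne.symm hne]), Finset.card_singleton]
      have hsub : ({0, x} : Finset (Fin (M+1))) ⊆ univ.filter (fun i => P i = j0) := by
        intro y hy
        simp only [mem_insert, mem_singleton] at hy
        rcases hy with rfl | rfl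
        · simp [hP0]
        · exact hx
      have := Finset.card_le_card hsub
      omega
    have hTA : univ.filter (fun x => x ≠ 0 ∧ t x = j)
        = univ.filter (fun x => P x = j) := by
      apply Finset.filter_congr
      intro x _
      constructor
      · rintro ⟨hx0, hxt⟩
        have hPx : P x ≠ j0 := by
          intro h
          have : x ∈ univ.filter (fun x => P x = j0) := by simp [h]
          rw [hA0] at this; simp at this; exact hx0 this
        rw [htdef] at hxt; simpa [hPx] using hxt
      · intro hPx
        have hx0 : x ≠ 0 := by rintro rfl; exact hjne (hPx.symm.trans hP0)
        have hPxj0 : P x ≠ j0 := fun h => hjne (hPx.symm.trans h)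
        exact ⟨hx0, by rw [htdef]; simpa [hPxj0] using hPx⟩
    rw [hTA]; exact hL j
  · -- j1 = P 0
    have hj1P : j1 = P 0 := by rw [hj1def, if_neg hP0]
    by_cases hjP : j = P 0
    · -- T j = A j0 ∪ (A (P 0)).erase 0
      have hTA : univ.filter (fun x => x ≠ 0 ∧ t x = j)
          = univ.filter (fun x => P x = j0) ∪ (univ.filter (fun x => P x = P 0)).erase 0 := by
        ext x
        simp only [mem_filter, mem_union, mem_erase, mem_univ, true_and]
        constructor
        · rintro ⟨hx0, hxt⟩
          rw [htdef] at hxt; dsimp only at hxt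
          by_cases h : P x = j0
          · exact Or.inl h
          · rw [if_neg h] at hxt; exact Or.inr ⟨hx0, hjP ▸ hxt⟩
        · rintro (h | ⟨hx0, h⟩)
          · refine ⟨fun hx => hP0 (hx ▸ h), ?_⟩
            rw [htdef]; dsimp only; rw [if_pos h, hj1P]; exact hjP.symm
          · refine ⟨hx0, ?_⟩
            rw [htdef]; dsimp only
            by_cases h' : P x = j0
            · rw [if_pos h', hj1P]; exact hjP.symm
            · rw [if_neg h', h]; exact hjP.symm
      rw [hTA]
      have hdisj : Disjoint (univ.filter (fun x => P x = j0))
          ((univ.filter (fun x => P x = P 0)).erase 0) := by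
        apply Finset.disjoint_left.mpr
        intro x hx hx'
        simp only [mem_filter, mem_erase, mem_univ, true_and] at hx hx'
        exact hP0 (hx ▸ hx'.2 ▸ rfl)
      rw [Finset.sum_union hdisj]
      have h0mem : (0 : Fin (M+1)) ∈ univ.filter (fun x => P x = P 0) := by simp
      rw [Finset.sum_erase_eq_sub h0mem]
      -- ∑ A j0 ≥ v 0
      have hAj0 : v 0 ≤ ∑ x ∈ univ.filter (fun x => P x = j0), v x := by
        rcases Finset.eq_empty_or_nonempty (univ.filter (fun x => P x = j0)) with he | hne
        · rw [he, Finset.sum_empty]; exact hchores 0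
        · obtain ⟨a, ha⟩ := Finset.card_eq_one.mp
            (le_antisymm hj0 (Finset.card_pos.mpr hne))
          rw [ha, Finset.sum_singleton]
          exact hordered 0 a (Fin.zero_le a)
      linarith [hL (P 0), hAj0]
      -- need: filter with `P x = j` vs `P x = P 0`: rewrite
    · -- T j = A j
      have hTA : univ.filter (fun x => x ≠ 0 ∧ t x = j)
          = univ.filter (fun x => P x = j) := by
        apply Finset.filter_congr
        intro x _
        constructor
        · rintro ⟨hx0, hxt⟩
          rw [htdef] at hxt; dsimp only at hxt
          by_cases h : P x = j0
          · rw [if_pos h, hj1P] at hxt; exact absurd hxt.symm hjP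
          · rwa [if_neg h] at hxt
        · intro hPx
          have hx0 : x ≠ 0 := by rintro rfl; exact hjP hPx.symm
          have hPxj0 : P x ≠ j0 := fun h => hjne (hPx.symm.trans h)
          exact ⟨hx0, by rw [htdef]; dsimp only; rwa [if_neg hPxj0]⟩
      rw [hTA]; exact hL j


/-- If `m < 2d` in an ordered chores instance, removing the largest chore `c_1`
(index 0) and one bundle does not decrease the maximin share:
`MMS^{d-1}(M \ {c_1}) ≥ MMS^d(M)`. -/
theorem stmt5 {m : ℕ} (d : ℕ) (v : Fin m → ℝ)
    (hd : 1 ≤ d) (hm : m < 2 * d)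
    (hchores : ∀ i, v i ≤ 0)
    (hordered : ∀ i j : Fin m, i ≤ j → v i ≤ v j) :
    MMS d v ≤ MMS (d - 1) (fun i : Fin (m - 1) => v ⟨i.val + 1, by omega⟩) := by
  classical
  haveI : Nonempty (Fin d) := ⟨⟨0, hd⟩⟩
  rw [MMS]
  apply ciSup_le
  intro P
  rcases Nat.lt_or_ge d 2 with hd2 | hd2
  · -- d = 1, so m ≤ 1 and both sides are easy
    have hd1 : d = 1 := by omega
    subst hd1
    have hm0 : m - 1 = 0 := by omega
    haveI : IsEmpty (Fin (m - 1)) := by rw [hm0]; infer_instance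
    haveI : IsEmpty (Fin (1 - 1)) := ⟨fun i => absurd i.isLt (by omega)⟩
    have hrhs : MMS (1 - 1) (fun i : Fin (m - 1) => v ⟨i.val + 1, by omega⟩) = 0 := by
      rw [MMS, ciSup_unique, Real.iInf_of_isEmpty]
    rw [hrhs]
    refine le_trans (ciInf_le (Finite.bddBelow_range _) 0) ?_
    exact Finset.sum_nonpos fun i _ => hchores i
  · obtain ⟨n, rfl⟩ : ∃ n, d = n + 1 := ⟨d - 1, by omega⟩
    have hn : 0 < n := by omega
    haveI : Nonempty (Fin n) := ⟨⟨0, hn⟩⟩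
    rcases Nat.eq_zero_or_pos m with hm0 | hmpos
    · -- no chores at all: both sides are 0
      subst hm0
      have h1 : (⨅ j : Fin (n + 1), ∑ i ∈ univ.filter (fun i => P i = j), v i) = 0 := by
        have hz : ∀ j : Fin (n + 1), ∑ i ∈ univ.filter (fun i => P i = j), v i = 0 := by
          intro j; rw [Finset.univ_eq_empty, Finset.filter_empty, Finset.sum_empty]
        simp only [hz]; exact ciInf_const
      haveI : IsEmpty (Fin (0 - 1)) := ⟨fun i => absurd i.isLt (by omega)⟩
      haveI : Nonempty (Fin (n + 1 - 1)) := ⟨⟨0, by omega⟩⟩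
      have hrhs : MMS (n + 1 - 1) (fun i : Fin (0 - 1) => v ⟨i.val + 1, by omega⟩) = 0 := by
        rw [MMS, ciSup_unique]
        have hz : ∀ k : Fin (n + 1 - 1),
            ∑ i ∈ Finset.univ.filter
              (fun i : Fin (0 - 1) => (default : Fin (0 - 1) → Fin (n + 1 - 1)) i = k),
              (fun i : Fin (0 - 1) => v ⟨i.val + 1, by omega⟩) i = 0 := by
          intro k
          rw [Finset.univ_eq_empty, Finset.filter_empty, Finset.sum_empty]
        simp only [hz]
        exact ciInf_const
      rw [h1, hrhs]
    · obtain ⟨M, rfl⟩ : ∃ M, m = M + 1 := ⟨m - 1, by omega⟩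
      obtain ⟨Q, hQ⟩ := stmt5_key hn hm v hchores hordered P
      refine le_trans hQ ?_
      exact le_ciSup (f := fun Q : Fin M → Fin n =>
        ⨅ k : Fin n, ∑ i ∈ Finset.univ.filter (fun i => Q i = k),
          (fun i : Fin (M + 1 - 1) => v ⟨i.val + 1, by omega⟩) i)
        (Finite.bddAbove_range _) Q
end

section
/- For any integers n ≥ 2 and k ≥ 2, there is a chores instance with n agents with identical additive valuations and an allocation that gives every agent at least (1+1/k) times its 1-out-of-n MMS, yet gives some agent strictly less than its 1-out-of-d MMS for every d ≥ 2. Concretely: one chore of value -k and k chores of value -1; MMS^d = MMS^n = -k for all d,n ≥ 2; the allocation giving agent 1 the hard chore plus one easy chore (value -k-1) and distributing the other k-1 easy chores among agents 2..n achieves the multiplicative bound but violates every ordinal bound for agent 1. -/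
open Finset

def bundleValue {m d : ℕ} (v : Fin m → ℝ) (P : Fin m → Fin d) (j : Fin d) : ℝ :=
  ∑ i ∈ univ.filter (fun i => P i = j), v i

section MMS

variable {m d : ℕ} [NeZero d] (v : Fin m → ℝ)

theorem MMS_le_of_nonpos (hv : ∀ i, v i ≤ 0) (i : Fin m) : MMS d v ≤ v i := by
  refine ciSup_le fun P => (ciInf_le (Set.finite_range _).bddBelow (P i)).trans ?_
  calc ∑ i' ∈ univ.filter (fun i' => P i' = P i), v i'
      ≤ ∑ i' ∈ {i}, v i' :=
        sum_le_sum_of_subset_of_nonpos' (by simp) fun i' _ _ => hv i'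
    _ = v i := sum_singleton _ _

theorem le_MMS_of_le_bundleValue (P : Fin m → Fin d) {c : ℝ}
    (h : ∀ j, c ≤ bundleValue v P j) : c ≤ MMS d v :=
  (le_ciInf h).trans <|
    le_ciSup (f := fun P => ⨅ j, bundleValue v P j) (Set.finite_range _).bddAbove P

end MMS

def choreValue (k : ℕ) : Fin (k + 1) → ℝ := fun i => if i.val = 0 then -(k : ℝ) else -1

section choreValue

variable {k : ℕ}

theorem choreValue_nonpos (i : Fin (k + 1)) : choreValue k i ≤ 0 := by
  unfold choreValue
  split_ifs <;> simp

theorem choreValue_zero : choreValue k 0 = -k := rfl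

theorem choreValue_of_ne_zero {i : Fin (k + 1)} (hi : i ≠ 0) : choreValue k i = -1 :=
  if_neg (Fin.val_ne_zero_iff.mpr hi)

theorem neg_le_sum_choreValue_of_zero_notMem {S : Finset (Fin (k + 1))} (hS : 0 ∉ S) :
    -(k : ℝ) ≤ ∑ i ∈ S, choreValue k i := by
  have hcard : #S ≤ k := by
    simpa using card_le_card (subset_erase.2 ⟨subset_univ S, hS⟩)
  have hsum : ∑ i ∈ S, choreValue k i = -#S := by
    rw [sum_congr rfl fun i hi => choreValue_of_ne_zero (ne_of_mem_of_not_mem hi hS)]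
    simp
  rw [hsum, neg_le_neg_iff]
  exact_mod_cast hcard

theorem MMS_choreValue {d : ℕ} (hd : 2 ≤ d) : MMS d (choreValue k) = -k := by
  obtain ⟨d, rfl⟩ := Nat.exists_eq_add_of_le' hd
  refine le_antisymm (MMS_le_of_nonpos _ choreValue_nonpos 0) ?_
  refine le_MMS_of_le_bundleValue _ (fun i => if i = 0 then 0 else 1) fun j => ?_
  by_cases hj : j = 0
  · have : univ.filter (fun i : Fin (k + 1) => (if i = 0 then 0 else 1 : Fin (d + 2)) = j) =
        {0} := by
      ext i
      by_cases hi : i = 0 <;> simp [hi, hj]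
    simp [bundleValue, this, choreValue_zero]
  · exact neg_le_sum_choreValue_of_zero_notMem (by simp [Ne.symm hj])

/-- Agent `0` receives the hard chore and the easy chore `1`, agent `1` all other chores. -/
theorem exists_allocation_choreValue {n : ℕ} (hn : 2 ≤ n) (hk : 1 ≤ k) :
    ∃ A : Fin (k + 1) → Fin n, ∃ j₀, bundleValue (choreValue k) A j₀ = -k - 1 ∧
      ∀ j, -(k : ℝ) - 1 ≤ bundleValue (choreValue k) A j := by
  obtain ⟨n, rfl⟩ := Nat.exists_eq_add_of_le' hn
  let A : Fin (k + 1) → Fin (n + 2) := fun i => if i.val ≤ 1 then 0 else 1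
  have hA₀ : univ.filter (fun i => A i = 0) = {0, ⟨1, by omega⟩} := by
    ext i
    simp only [A, mem_filter, mem_univ, true_and, mem_insert, mem_singleton, Fin.ext_iff,
      Fin.val_zero]
    split_ifs <;> simp only [Fin.val_zero, Fin.val_one, true_iff] <;> omega
  have hvalue₀ : bundleValue (choreValue k) A 0 = -k - 1 := by
    have h₁ : (⟨1, by omega⟩ : Fin (k + 1)) ≠ 0 := Fin.ne_of_val_ne (by simp)
    rw [bundleValue, hA₀, sum_pair h₁.symm, choreValue_zero, choreValue_of_ne_zero h₁]
    ring
  refine ⟨A, 0, hvalue₀, fun j => ?_⟩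
  by_cases hj : j = 0
  · rw [hj, hvalue₀]
  · have hj₀ : (0 : Fin (k + 1)) ∉ univ.filter (fun i => A i = j) := by simp [A, Ne.symm hj]
    exact (sub_le_self _ zero_le_one).trans (neg_le_sum_choreValue_of_zero_notMem hj₀)

end choreValue

/-- Multiplicative MMS approximation does not imply ordinal MMS approximation:
with one chore of value `-k` and `k` chores of value `-1`, `MMS^d = -k` for all
`d ≥ 2`, and there is an allocation among `n` agents giving every agent at least
`(1+1/k)` times its 1-out-of-`n` MMS while some agent gets strictly less than its
1-out-of-`d` MMS for every `d ≥ 2`. -/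
theorem stmt8 (n k : ℕ) (hn : 2 ≤ n) (hk : 2 ≤ k) :
    let v : Fin (k + 1) → ℝ := fun i => if i.val = 0 then -(k : ℝ) else -1
    (∀ d : ℕ, 2 ≤ d → MMS d v = -(k : ℝ)) ∧
    (∃ A : Fin (k + 1) → Fin n,
      (∀ j : Fin n,
        (1 + 1 / (k : ℝ)) * MMS n v ≤ ∑ i ∈ Finset.univ.filter (fun i => A i = j), v i) ∧
      (∃ j : Fin n, ∀ d : ℕ, 2 ≤ d →
        ∑ i ∈ Finset.univ.filter (fun i => A i = j), v i < MMS d v)) := by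
  intro v
  obtain ⟨A, j₀, hj₀, hA⟩ := exists_allocation_choreValue hn (k := k) (by omega)
  have hfactor : (1 + 1 / (k : ℝ)) * -k = -k - 1 := by
    field_simp
    ring
  refine ⟨fun d hd => MMS_choreValue hd, A, fun j => ?_, j₀, fun d hd => ?_⟩
  · rw [show MMS n v = -k from MMS_choreValue hn, hfactor]
    exact hA j
  · rw [show MMS d v = -k from MMS_choreValue hd]
    exact (show bundleValue v A j₀ = -k - 1 from hj₀).trans_lt (by linarith)
end

section
/- For n ≥ 2 agents with additive chore valuations, any EFx allocation A_1,...,A_n satisfies 1-out-of-⌈(n+1)/2⌉ MMS: for every agent i, v_i(A_i) ≥ MMS^d_i(M) for every d ≤ (n+1)/2. -/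
open Finset

lemma mms_le_of_forall {m d : ℕ} (hd : 1 ≤ d) (v : Fin m → ℝ) (B : ℝ)
    (h : ∀ P : Fin m → Fin d, ∃ j : Fin d,
      ∑ i ∈ Finset.univ.filter (fun i => P i = j), v i ≤ B) :
    MMS d v ≤ B := by
  have hne : Nonempty (Fin d) := ⟨⟨0, hd⟩⟩
  apply ciSup_le
  intro P
  obtain ⟨j, hj⟩ := h P
  exact le_trans (ciInf_le (Set.Finite.bddBelow (Set.finite_range _)) j) hj

/-- Sum over the fibers equals the total sum. -/
lemma fiber_sum_total {m d : ℕ} (P : Fin m → Fin d) (v : Fin m → ℝ) :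
    ∑ j : Fin d, ∑ i ∈ Finset.univ.filter (fun i => P i = j), v i = ∑ i, v i := by
  rw [Finset.sum_fiberwise_eq_sum_filter Finset.univ Finset.univ P v]
  simp

/-- The MMS is at most the average of the total value. -/
lemma mms_le_avg {m d : ℕ} (hd : 1 ≤ d) (v : Fin m → ℝ) :
    MMS d v ≤ (∑ i, v i) / d := by
  apply mms_le_of_forall hd
  intro P
  have hdpos : (0 : ℝ) < d := by exact_mod_cast hd
  have hsum : ∑ j : Fin d, ∑ i ∈ Finset.univ.filter (fun i => P i = j), v i
      ≤ ∑ _j : Fin d, (∑ i, v i) / d := by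
    rw [fiber_sum_total, Finset.sum_const, Finset.card_univ, Fintype.card_fin,
      nsmul_eq_mul, mul_div_cancel₀ _ (ne_of_gt hdpos)]
  obtain ⟨j, _, hj⟩ := Finset.exists_le_of_sum_le
    (Finset.univ_nonempty_iff.2 ⟨⟨0, hd⟩⟩) hsum
  exact ⟨j, hj⟩

/-- For nonpositive valuations, the MMS is at most the value of any item. -/
lemma mms_le_item {m d : ℕ} (hd : 1 ≤ d) (v : Fin m → ℝ) (hv : ∀ x, v x ≤ 0)
    (c : Fin m) : MMS d v ≤ v c := by
  apply mms_le_of_forall hd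
  intro P
  refine ⟨P c, ?_⟩
  have hc : ({c} : Finset (Fin m)) ⊆ Finset.univ.filter (fun i => P i = P c) := by
    simp
  have hsd := Finset.sum_sdiff (f := v) hc
  have hnp : ∑ i ∈ Finset.univ.filter (fun i => P i = P c) \ {c}, v i ≤ 0 :=
    Finset.sum_nonpos (fun i _ => hv i)
  have : ∑ i ∈ Finset.univ.filter (fun i => P i = P c), v i
      ≤ ∑ i ∈ ({c} : Finset (Fin m)), v i := by
    rw [← hsd]; linarith
  simpa using this

/-- An EFx allocation of chores among `n ≥ 2` agents satisfies
1-out-of-`⌈(n+1)/2⌉` MMS: every agent `i` gets at least `MMS^d_i(M)` for every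
`d` with `1 ≤ d` and `d ≤ (n+1)/2` (equivalently `2d ≤ n+1`). -/
theorem stmt10 {m n : ℕ} (hn : 2 ≤ n) (V : Fin n → Fin m → ℝ)
    (hchores : ∀ i x, V i x ≤ 0)
    (A : Fin m → Fin n)
    (hEFx : ∀ i j : Fin n, ∀ c ∈ Finset.univ.filter (fun x => A x = i),
      ∑ x ∈ (Finset.univ.filter (fun x => A x = i)).erase c, V i x ≥
        ∑ x ∈ Finset.univ.filter (fun x => A x = j), V i x) :
    ∀ i : Fin n, ∀ d : ℕ, 1 ≤ d → 2 * d ≤ n + 1 →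
      MMS d (V i) ≤ ∑ x ∈ Finset.univ.filter (fun x => A x = i), V i x := by
  intro i d hd1 hd2
  set v : Fin m → ℝ := V i with hv
  set B : Fin n → Finset (Fin m) := fun j => Finset.univ.filter (fun x => A x = j)
    with hB
  set S : Fin n → ℝ := fun j => ∑ x ∈ B j, v x with hS
  have hvT : ∀ x, v x ≤ 0 := hchores i
  have hT : ∑ j : Fin n, S j = ∑ x, v x := fiber_sum_total A v
  have hTneg : ∑ x, v x ≤ 0 := Finset.sum_nonpos (fun x _ => hvT x)
  have hdpos : (0 : ℝ) < d := by exact_mod_cast hd1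
  show MMS d v ≤ S i
  by_cases hBi : (B i).Nonempty
  · -- pick the max-valued chore in B i
    obtain ⟨c1, hc1mem, hc1max⟩ := Finset.exists_max_image (B i) v hBi
    by_cases hbig : ((B i).erase c1).Nonempty
    · -- |B i| ≥ 2
      set E : ℝ := ∑ x ∈ (B i).erase c1, v x with hE
      have hSi : S i = v c1 + E := (Finset.add_sum_erase (B i) v hc1mem).symm
      have hEle : E ≤ v c1 := by
        obtain ⟨b, hb⟩ := hbig
        have hbBi : b ∈ B i := Finset.mem_of_mem_erase hb
        have hsub : ({b} : Finset (Fin m)) ⊆ (B i).erase c1 := by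
          simpa using hb
        have hsd := Finset.sum_sdiff (f := v) hsub
        have hnp : ∑ x ∈ ((B i).erase c1) \ {b}, v x ≤ 0 :=
          Finset.sum_nonpos (fun x _ => hvT x)
        have : E ≤ ∑ x ∈ ({b} : Finset (Fin m)), v x := by
          rw [hE, ← hsd]; linarith
        have := this.trans (by simpa using hc1max b hbBi)
        exact this
      have hEneg : E ≤ 0 := Finset.sum_nonpos (fun x _ => hvT x)
      have hSj : ∀ j, S j ≤ E := by
        intro j
        by_cases hji : j = i
        · subst hji
          rw [hSi]
          linarith [hvT c1]
        · exact hEFx i j c1 hc1mem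
      have hTle : ∑ x, v x ≤ S i + (n - 1) * E := by
        have hsplit : ∑ j : Fin n, S j = S i + ∑ j ∈ Finset.univ.erase i, S j :=
          (Finset.add_sum_erase Finset.univ S (Finset.mem_univ i)).symm
        have herase : ∑ j ∈ Finset.univ.erase i, S j
            ≤ ∑ _j ∈ Finset.univ.erase i, E :=
          Finset.sum_le_sum (fun j _ => hSj j)
        have hcard : (Finset.univ.erase i).card = n - 1 := by
          rw [Finset.card_erase_of_mem (Finset.mem_univ i), Finset.card_univ,
            Fintype.card_fin]
        rw [← hT, hsplit]
        have : ∑ _j ∈ Finset.univ.erase i, E = (n - 1 : ℝ) * E := by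
          rw [Finset.sum_const, hcard, nsmul_eq_mul]
          have : ((n - 1 : ℕ) : ℝ) = (n : ℝ) - 1 := by
            have : 1 ≤ n := le_trans one_le_two hn
            push_cast [this]
            ring
          rw [this]
        linarith [herase, this.le, this.ge]
      -- S i ≥ 2 E
      have hSi2E : 2 * E ≤ S i := by rw [hSi]; linarith
      -- conclude T ≤ d * S i
      have hdn : (2 : ℝ) * d ≤ n + 1 := by exact_mod_cast hd2
      have hkey : ∑ x, v x ≤ d * S i := by
        have h1 : (n - 1 : ℝ) * E ≤ (2 * d - 2) * E := by
          have : (2 * d - 2 : ℝ) ≤ n - 1 := by linarith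
          nlinarith [hEneg]
        have h2 : (2 * d - 2 : ℝ) * E ≤ (d - 1) * S i := by
          have hd1' : (1 : ℝ) ≤ d := by exact_mod_cast hd1
          nlinarith [hSi2E, hEneg]
        linarith
      calc MMS d v ≤ (∑ x, v x) / d := mms_le_avg hd1 v
        _ ≤ S i := by rw [div_le_iff₀ hdpos]; linarith [hkey]
    · -- B i = {c1}
      have hsingle : B i = {c1} := by
        rw [Finset.not_nonempty_iff_eq_empty] at hbig
        apply Finset.eq_singleton_iff_unique_mem.2
        refine ⟨hc1mem, fun x hx => ?_⟩
        by_contra hne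
        exact absurd (Finset.mem_erase.2 ⟨hne, hx⟩) (by simp [hbig])
      have : S i = v c1 := by rw [hS]; simp [hsingle]
      rw [this]
      exact mms_le_item hd1 v hvT c1
  · -- B i is empty
    have : S i = 0 := by
      rw [Finset.not_nonempty_iff_eq_empty] at hBi
      simp [hS, hBi]
    rw [this]
    calc MMS d v ≤ (∑ x, v x) / d := mms_le_avg hd1 v
      _ ≤ 0 := div_nonpos_of_nonpos_of_nonneg hTneg hdpos.le
end

section
/- There exists a chores instance (3 identical agents, 6 chores each of value -1) in which allocating a single chore c_1 to one agent satisfies that agent's 1-out-of-3 MMS (v(c_1) = -1 ≥ MMS^3 = -2), yet the reduction is not valid: the remaining agents' maximin share strictly decreases, MMS^2(M \ {c_1}) = -3 < MMS^3(M) = -2. -/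
open Finset

lemma const_MMS_le {m d k : ℕ} (hd : 0 < d)
    (h : ∀ P : Fin m → Fin d, ∃ j : Fin d,
      k ≤ (Finset.univ.filter (fun i => P i = j)).card) :
    MMS d (fun _ : Fin m => (-1 : ℝ)) ≤ -(k : ℝ) := by
  have : Nonempty (Fin d) := ⟨⟨0, hd⟩⟩
  apply ciSup_le
  intro P
  obtain ⟨j, hj⟩ := h P
  calc (⨅ j : Fin d, ∑ i ∈ Finset.univ.filter (fun i => P i = j), (-1 : ℝ))
      ≤ ∑ i ∈ Finset.univ.filter (fun i => P i = j), (-1 : ℝ) :=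
        ciInf_le (Finite.bddBelow_range _) j
    _ = -((Finset.univ.filter (fun i => P i = j)).card : ℝ) := by simp
    _ ≤ -(k : ℝ) := by
        have : (k : ℝ) ≤ ((Finset.univ.filter (fun i => P i = j)).card : ℝ) := by
          exact_mod_cast hj
        linarith

lemma le_const_MMS {m d k : ℕ} (hd : 0 < d) (P : Fin m → Fin d)
    (h : ∀ j : Fin d, (Finset.univ.filter (fun i => P i = j)).card ≤ k) :
    -(k : ℝ) ≤ MMS d (fun _ : Fin m => (-1 : ℝ)) := by
  have : Nonempty (Fin d) := ⟨⟨0, hd⟩⟩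
  refine le_trans ?_ (le_ciSup (Finite.bddAbove_range _) P)
  apply le_ciInf
  intro j
  have h1 : ∑ i ∈ Finset.univ.filter (fun i => P i = j), (-1 : ℝ)
      = -((Finset.univ.filter (fun i => P i = j)).card : ℝ) := by simp
  rw [h1]
  have : ((Finset.univ.filter (fun i => P i = j)).card : ℝ) ≤ (k : ℝ) := by
    exact_mod_cast h j
  linarith

lemma mms3 : MMS 3 (fun _ : Fin 6 => (-1 : ℝ)) = -2 := by
  have hle : MMS 3 (fun _ : Fin 6 => (-1 : ℝ)) ≤ -(2:ℕ) := by
    apply const_MMS_le (by norm_num)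
    intro P
    obtain ⟨j, hj⟩ := Fintype.exists_lt_card_fiber_of_mul_lt_card (f := P) (n := 1)
      (by simp)
    exact ⟨j, hj⟩
  have hge : -((2:ℕ) : ℝ) ≤ MMS 3 (fun _ : Fin 6 => (-1 : ℝ)) := by
    apply le_const_MMS (by norm_num) (fun i => ⟨i.val / 2, by omega⟩)
    intro j
    fin_cases j <;> decide
  push_cast at hle hge
  linarith

lemma mms2 : MMS 2 (fun _ : Fin 5 => (-1 : ℝ)) = -3 := by
  have hle : MMS 2 (fun _ : Fin 5 => (-1 : ℝ)) ≤ -(3:ℕ) := by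
    apply const_MMS_le (by norm_num)
    intro P
    obtain ⟨j, hj⟩ := Fintype.exists_lt_card_fiber_of_mul_lt_card (f := P) (n := 2)
      (by simp)
    exact ⟨j, hj⟩
  have hge : -((3:ℕ) : ℝ) ≤ MMS 2 (fun _ : Fin 5 => (-1 : ℝ)) := by
    apply le_const_MMS (by norm_num) (fun i => ⟨i.val / 3, by omega⟩)
    intro j
    fin_cases j <;> decide
  push_cast at hle hge
  linarith

/-- With 3 identical agents and 6 chores of value `-1`: allocating a single chore
satisfies that agent's 1-out-of-3 MMS (`-1 ≥ MMS^3 = -2`), but the reduction is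
not valid since `MMS^2` of the remaining 5 chores is `-3 < -2 = MMS^3`. -/
theorem stmt16 :
    MMS 3 (fun _ : Fin 6 => (-1 : ℝ)) = -2 ∧
    MMS 3 (fun _ : Fin 6 => (-1 : ℝ)) ≤ -1 ∧
    MMS 2 (fun _ : Fin 5 => (-1 : ℝ)) = -3 ∧
    MMS 2 (fun _ : Fin 5 => (-1 : ℝ)) < MMS 3 (fun _ : Fin 6 => (-1 : ℝ)) := by
  refine ⟨mms3, by rw [mms3]; norm_num, mms2, by rw [mms2, mms3]; norm_num⟩
end

section
/- For 3 identical agents and 3(k+2) chores each of value -1 (k ≥ 0): MMS^3(M) = -(k+2); any bundle S of k+1 chores satisfies v(S) = -(k+1) ≥ MMS^3(M); yet after removing S, MMS^2(M \ S) = -⌈(2k+5)/2⌉ = -(k+3) < MMS^3(M), so the reduction strictly decreases the remaining agents' maximin shares. -/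
/-!
A partition of `m` unit chores into `d` bundles has a bundle of at least `⌈m/d⌉` chores by
pigeonhole, and distributing the chores round-robin (`i ↦ i % d`) attains this bound, so the
maximin share is `-⌈m/d⌉`.
-/

open Finset

namespace UnitChores

variable {m d : ℕ}

lemma sum_fiber_neg_one (P : Fin m → Fin d) (j : Fin d) :
    ∑ i ∈ univ.filter (fun i => P i = j), (fun _ : Fin m => (-1 : ℝ)) i =
      -(#(univ.filter fun i => P i = j) : ℝ) := by
  simp

lemma card_fiber_mod_le [NeZero d] {c : ℕ} (hm : m ≤ d * c) (j : Fin d) :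
    #(univ.filter fun i : Fin m => Fin.ofNat d i = j) ≤ c := by
  have hc : #(univ.filter fun i : Fin m => Fin.ofNat d i = j) ≤ #(range c) := by
    refine card_le_card_of_injOn (fun i => i.val / d) (fun i _ => ?_) (fun a ha b hb hab => ?_)
    · simpa using Nat.div_lt_of_lt_mul (i.isLt.trans_le hm)
    · simp only [coe_filter, mem_univ, true_and, Set.mem_ofPred_eq, Fin.ext_iff,
        Fin.val_ofNat] at ha hb hab
      exact Fin.ext (by rw [← Nat.div_add_mod a d, ← Nat.div_add_mod b d, hab, ha, hb])
  simpa using hc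

lemma neg_le_MMS_neg_one {c : ℕ} (hd : 0 < d) (hm : m ≤ d * c) :
    -(c : ℝ) ≤ MMS d (fun _ : Fin m => (-1 : ℝ)) := by
  have : NeZero d := ⟨hd.ne'⟩
  refine le_ciSup_of_le (Set.finite_range _).bddAbove (fun i => Fin.ofNat d i)
    (le_ciInf fun j => ?_)
  rw [sum_fiber_neg_one, neg_le_neg_iff, Nat.cast_le]
  exact card_fiber_mod_le hm j

lemma MMS_neg_one_le {c : ℕ} (hd : 0 < d) (hm : d * c < m) :
    MMS d (fun _ : Fin m => (-1 : ℝ)) ≤ -((c : ℝ) + 1) := by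
  have : NeZero d := ⟨hd.ne'⟩
  refine ciSup_le fun P => ?_
  obtain ⟨j, hj⟩ := Fintype.exists_lt_card_fiber_of_mul_lt_card P (n := c) (by simpa using hm)
  refine (ciInf_le (Set.finite_range _).bddBelow j).trans ?_
  rw [sum_fiber_neg_one, neg_le_neg_iff]
  exact_mod_cast hj

theorem MMS_neg_one_eq {c : ℕ} (hlt : d * c < m) (hle : m ≤ d * (c + 1)) :
    MMS d (fun _ : Fin m => (-1 : ℝ)) = -((c : ℝ) + 1) := by
  have hd : 0 < d := Nat.pos_of_ne_zero (by rintro rfl; omega)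
  refine le_antisymm (MMS_neg_one_le hd hlt) ?_
  exact_mod_cast neg_le_MMS_neg_one hd hle

end UnitChores

open UnitChores in
/-- With 3 identical agents and `3(k+2)` chores of value `-1`:
`MMS^3 = -(k+2)`; any bundle `S` of `k+1` chores has value `-(k+1) ≥ MMS^3`;
yet after removing `S`, `MMS^2` of the remaining `2k+5` chores is
`-(k+3) < MMS^3`, so the reduction strictly decreases the remaining agents'
maximin shares. -/
theorem stmt17 (k : ℕ) :
    MMS 3 (fun _ : Fin (3 * (k + 2)) => (-1 : ℝ)) = -((k : ℝ) + 2) ∧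
    (∀ S : Finset (Fin (3 * (k + 2))), S.card = k + 1 →
      ∑ i ∈ S, (fun _ : Fin (3 * (k + 2)) => (-1 : ℝ)) i = -((k : ℝ) + 1) ∧
      MMS 3 (fun _ : Fin (3 * (k + 2)) => (-1 : ℝ)) ≤ -((k : ℝ) + 1)) ∧
    MMS 2 (fun _ : Fin (2 * k + 5) => (-1 : ℝ)) = -((k : ℝ) + 3) ∧
    MMS 2 (fun _ : Fin (2 * k + 5) => (-1 : ℝ)) <
      MMS 3 (fun _ : Fin (3 * (k + 2)) => (-1 : ℝ)) := by
  have h3 : MMS 3 (fun _ : Fin (3 * (k + 2)) => (-1 : ℝ)) = -((k : ℝ) + 2) := by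
    rw [MMS_neg_one_eq (c := k + 1) (by omega) (by omega)]
    push_cast; ring
  have h2 : MMS 2 (fun _ : Fin (2 * k + 5) => (-1 : ℝ)) = -((k : ℝ) + 3) := by
    rw [MMS_neg_one_eq (c := k + 2) (by omega) (by omega)]
    push_cast; ring
  refine ⟨h3, fun S hS => ⟨by simp [hS], by rw [h3]; linarith⟩, h2, by rw [h2, h3]; linarith⟩
end
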